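/- arXiv:2509.08796 — 2 statements merged into one kernel-verified Lean document; each statement's English description precedes it below -/
import Mathlib

section
/- Let 1 ≤ p < ∞ and let (u_j) be a normalized block basic sequence of the unit vector basis in the p-convexified Schreier space S_p, with m_j = max supp u_j. Then (e_{m_j}) 1-dominates (u_j): for all scalars α_1,...,α_k, ‖Σ_{j=1}^k α_j u_j‖_{S_p} ≤ ‖Σ_{j=1}^k α_j e_{m_j}‖_{S_p}. -/
/-- A Schreier set: a finite set `F` of naturals that is empty or satisfies `|F| ≤ min F`. -/
def IsSchreier (F : Finset ℕ) : Prop := ∀ h : F.Nonempty, F.card ≤ F.min' h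

/-- The norm of the `p`-convexified Schreier space `S_p`:
`‖x‖ = sup {(∑_{n ∈ F} |x n|^p)^(1/p) : F a Schreier set}`. -/
noncomputable def schreierNorm (p : ℝ) (x : ℕ → ℝ) : ℝ :=
  ⨆ F : {F : Finset ℕ // IsSchreier F}, (∑ n ∈ F.1, |x n| ^ p) ^ (1 / p)

lemma isSchreier_subset {F G : Finset ℕ} (hF : IsSchreier F) (h : G ⊆ F) : IsSchreier G := by
  intro hG
  have hFne : F.Nonempty := hG.mono h
  calc G.card ≤ F.card := Finset.card_le_card h
    _ ≤ F.min' hFne := hF hFne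
    _ ≤ G.min' hG := Finset.min'_le _ _ (h (G.min'_mem hG))

lemma sum_rpow_le_schreierNorm {p : ℝ} (hp : 0 < p) {z : ℕ → ℝ}
    (hz : (Function.support z).Finite) {G : Finset ℕ} (hG : IsSchreier G) :
    (∑ n ∈ G, |z n| ^ p) ^ (1 / p) ≤ schreierNorm p z := by
  have key : ∀ F : Finset ℕ, ∑ n ∈ F, |z n| ^ p ≤ ∑ n ∈ hz.toFinset, |z n| ^ p := by
    intro F
    have h1 : ∑ n ∈ F ∩ hz.toFinset, |z n| ^ p = ∑ n ∈ F, |z n| ^ p := by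
      apply Finset.sum_subset Finset.inter_subset_left
      intro n hnF hn
      have : z n = 0 := by
        by_contra h
        exact hn (Finset.mem_inter.mpr ⟨hnF, hz.mem_toFinset.mpr h⟩)
      rw [this, abs_zero, Real.zero_rpow hp.ne']
    rw [← h1]
    apply Finset.sum_le_sum_of_subset_of_nonneg Finset.inter_subset_right
    intro n _ _
    exact Real.rpow_nonneg (abs_nonneg _) _
  have hbdd : BddAbove (Set.range fun F : {F : Finset ℕ // IsSchreier F} =>
      (∑ n ∈ F.1, |z n| ^ p) ^ (1 / p)) := by
    refine ⟨(∑ n ∈ hz.toFinset, |z n| ^ p) ^ (1 / p), ?_⟩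
    rintro x ⟨⟨F, hF⟩, rfl⟩
    exact Real.rpow_le_rpow (Finset.sum_nonneg fun n _ => Real.rpow_nonneg (abs_nonneg _) _)
      (key F) (by positivity)
  exact le_ciSup hbdd ⟨G, hG⟩

lemma schreierNorm_nonneg (p : ℝ) (z : ℕ → ℝ) : 0 ≤ schreierNorm p z :=
  Real.iSup_nonneg fun F => Real.rpow_nonneg
    (Finset.sum_nonneg fun n _ => Real.rpow_nonneg (abs_nonneg _) _) _

/-- Let `1 ≤ p < ∞` and let `(u j)` be a normalized block basic sequence of the unit vector
basis in `S_p`, with `m j = max (supp (u j))`. Then `(e_{m j})` 1-dominates `(u j)`. -/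
theorem schreier_maxSupport_dominates (p : ℝ) (hp : 1 ≤ p)
    (u : ℕ → ℕ → ℝ) (m : ℕ → ℕ)
    (hfin : ∀ j, (Function.support (u j)).Finite)
    (hmax : ∀ j, IsGreatest (Function.support (u j)) (m j))
    (hblock : ∀ j, ∀ i ∈ Function.support (u (j + 1)), m j < i)
    (hnorm : ∀ j, schreierNorm p (u j) = 1)
    (k : ℕ) (α : Fin k → ℝ) :
    schreierNorm p (∑ j, α j • u j) ≤
      schreierNorm p (∑ j, α j • (Pi.single (m j) 1 : ℕ → ℝ)) := by
  classical
  have hp0 : 0 < p := one_pos.trans_le hp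
  have hp0' : 0 < 1 / p := by positivity
  set x : ℕ → ℝ := ∑ j, α j • u j with hx
  set y : ℕ → ℝ := ∑ j, α j • (Pi.single (m j) 1 : ℕ → ℝ) with hy
  have hm : StrictMono m := strictMono_nat_of_lt_succ fun j => hblock j (m (j + 1)) (hmax (j + 1)).1
  have hsupp_lt : ∀ i j : ℕ, i < j → ∀ n ∈ Function.support (u j), m i < n := by
    intro i j hij n hn
    cases j with
    | zero => omega
    | succ j' => exact lt_of_le_of_lt (hm.monotone (Nat.lt_succ_iff.mp hij)) (hblock j' n hn)
  have hdisj : ∀ i j : ℕ, i ≠ j → ∀ n, n ∈ Function.support (u i) → n ∉ Function.support (u j) := by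
    intro i j hij n hni hnj
    rcases hij.lt_or_gt with h | h
    · exact absurd ((hmax i).2 hni) (not_le.mpr (hsupp_lt i j h n hnj))
    · exact absurd ((hmax j).2 hnj) (not_le.mpr (hsupp_lt j i h n hni))
  have hyfin : (Function.support y).Finite := by
    apply Set.Finite.subset (Set.finite_range fun j : Fin k => m j)
    intro n hn
    by_contra hne
    apply hn
    simp only [hy, Finset.sum_apply, Pi.smul_apply, smul_eq_mul]
    apply Finset.sum_eq_zero
    intro j _
    rw [Pi.single_apply, if_neg, mul_zero]
    intro h; exact hne ⟨j, h.symm⟩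
  have hym : ∀ j : Fin k, y (m j) = α j := by
    intro j
    simp only [hy, Finset.sum_apply, Pi.smul_apply, smul_eq_mul]
    rw [Finset.sum_eq_single j]
    · rw [Pi.single_apply, if_pos rfl, mul_one]
    · intro i _ hij
      rw [Pi.single_apply, if_neg, mul_zero]
      intro h
      exact hij ((Fin.val_injective (hm.injective h)).symm)
    · intro h; exact absurd (Finset.mem_univ j) h
  haveI : Nonempty {F : Finset ℕ // IsSchreier F} :=
    ⟨⟨∅, fun h => absurd h (by simp)⟩⟩
  conv_lhs => rw [schreierNorm]
  apply ciSup_le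
  rintro ⟨F, hF⟩
  set S : Fin k → Finset ℕ := fun j => (hfin j).toFinset with hS
  set J : Finset (Fin k) := Finset.univ.filter (fun j => (F ∩ S j).Nonempty) with hJ
  have hpd : (↑J : Set (Fin k)).Pairwise fun i j => Disjoint (F ∩ S i) (F ∩ S j) := by
    intro i _ j _ hij
    rw [Finset.disjoint_left]
    intro n hni hnj
    have h1 : n ∈ Function.support (u i) := (hfin i).mem_toFinset.mp (Finset.mem_inter.mp hni).2
    have h2 : n ∈ Function.support (u j) := (hfin j).mem_toFinset.mp (Finset.mem_inter.mp hnj).2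
    exact hdisj i j (fun h => hij (Fin.val_injective h)) n h1 h2
  have hsub : (J.biUnion fun j => F ∩ S j) ⊆ F := by
    intro n hn
    rcases Finset.mem_biUnion.mp hn with ⟨j, _, hnj⟩
    exact (Finset.mem_inter.mp hnj).1
  have hsum1 : ∑ n ∈ F, |x n| ^ p = ∑ j ∈ J, ∑ n ∈ F ∩ S j, |x n| ^ p := by
    rw [← Finset.sum_biUnion hpd]
    refine (Finset.sum_subset hsub ?_).symm
    intro n hnF hn
    have hx0 : x n = 0 := by
      simp only [hx, Finset.sum_apply, Pi.smul_apply, smul_eq_mul]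
      apply Finset.sum_eq_zero
      intro j _
      have hu0 : u j n = 0 := by
        by_contra h
        apply hn
        apply Finset.mem_biUnion.mpr
        have hmem : n ∈ F ∩ S j :=
          Finset.mem_inter.mpr ⟨hnF, (hfin j).mem_toFinset.mpr h⟩
        refine ⟨j, ?_, hmem⟩
        rw [hJ]
        simp only [Finset.mem_filter, Finset.mem_univ, true_and]
        exact ⟨n, hmem⟩
      rw [hu0, mul_zero]
    rw [hx0, abs_zero, Real.zero_rpow hp0.ne']
  have hinner : ∀ j ∈ J, ∑ n ∈ F ∩ S j, |x n| ^ p ≤ |α j| ^ p := by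
    intro j hjJ
    have hxn : ∀ n ∈ F ∩ S j, |x n| ^ p = |α j| ^ p * |u ↑j n| ^ p := by
      intro n hn
      have hns : n ∈ Function.support (u ↑j) :=
        (hfin ↑j).mem_toFinset.mp (Finset.mem_inter.mp hn).2
      have hxv : x n = α j * u ↑j n := by
        simp only [hx, Finset.sum_apply, Pi.smul_apply, smul_eq_mul]
        rw [Finset.sum_eq_single j]
        · intro i _ hij
          have hu0 : u ↑i n = 0 := by
            by_contra h
            exact hdisj ↑i ↑j (fun he => hij (Fin.val_injective he)) n h hns
          rw [hu0, mul_zero]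
        · intro h; exact absurd (Finset.mem_univ j) h
      rw [hxv, abs_mul, Real.mul_rpow (abs_nonneg _) (abs_nonneg _)]
    rw [Finset.sum_congr rfl hxn, ← Finset.mul_sum]
    have hnn : 0 ≤ ∑ n ∈ F ∩ S j, |u ↑j n| ^ p :=
      Finset.sum_nonneg fun n _ => Real.rpow_nonneg (abs_nonneg _) _
    have hle1 : ∑ n ∈ F ∩ S j, |u ↑j n| ^ p ≤ 1 := by
      have hGsub : IsSchreier (F ∩ S j) := isSchreier_subset hF Finset.inter_subset_left
      have hnle := sum_rpow_le_schreierNorm hp0 (hfin ↑j) hGsub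
      rw [hnorm ↑j] at hnle
      calc ∑ n ∈ F ∩ S j, |u ↑j n| ^ p
          = ((∑ n ∈ F ∩ S j, |u ↑j n| ^ p) ^ (1 / p)) ^ p := by
            rw [← Real.rpow_mul hnn, one_div_mul_cancel hp0.ne', Real.rpow_one]
        _ ≤ 1 ^ p := Real.rpow_le_rpow (Real.rpow_nonneg hnn _) hnle hp0.le
        _ = 1 := Real.one_rpow p
    exact mul_le_of_le_one_right (Real.rpow_nonneg (abs_nonneg _) p) hle1
  set G' : Finset ℕ := J.image (fun j => m j.val) with hG'
  have hminj : ∀ a ∈ J, ∀ b ∈ J, m ↑a = m ↑b → a = b := by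
    intro a _ b _ h
    exact Fin.val_injective (hm.injective h)
  have hsum2 : ∑ n ∈ G', |y n| ^ p = ∑ j ∈ J, |α j| ^ p := by
    rw [hG', Finset.sum_image hminj]
    exact Finset.sum_congr rfl fun j _ => by rw [hym j]
  have hG'S : IsSchreier G' := by
    intro hne
    have hmin : G'.min' hne ∈ G' := Finset.min'_mem _ _
    rcases Finset.mem_image.mp hmin with ⟨j, hjJ, hjm⟩
    rcases (Finset.mem_filter.mp hjJ).2 with ⟨n0, hn0⟩
    have hFne : F.Nonempty := ⟨n0, (Finset.mem_inter.mp hn0).1⟩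
    have h2 : J.card ≤ F.card := by
      calc J.card = ∑ _j ∈ J, 1 := by simp
        _ ≤ ∑ j ∈ J, (F ∩ S j).card := Finset.sum_le_sum
            (fun i hi => Finset.card_pos.mpr (Finset.mem_filter.mp hi).2)
        _ = (J.biUnion fun j => F ∩ S j).card := (Finset.card_biUnion
            (fun a ha b hb hab => hpd ha hb hab)).symm
        _ ≤ F.card := Finset.card_le_card hsub
    have h3 : F.min' hFne ≤ m ↑j :=
      le_trans (Finset.min'_le F n0 (Finset.mem_inter.mp hn0).1)
        ((hmax ↑j).2 ((hfin ↑j).mem_toFinset.mp (Finset.mem_inter.mp hn0).2))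
    calc G'.card ≤ J.card := Finset.card_image_le
      _ ≤ F.card := h2
      _ ≤ F.min' hFne := hF hFne
      _ ≤ m ↑j := h3
      _ = G'.min' hne := hjm
  calc (∑ n ∈ F, |x n| ^ p) ^ (1 / p)
      ≤ (∑ n ∈ G', |y n| ^ p) ^ (1 / p) := by
        apply Real.rpow_le_rpow
          (Finset.sum_nonneg fun n _ => Real.rpow_nonneg (abs_nonneg _) _) _ hp0'.le
        rw [hsum1, hsum2]
        exact Finset.sum_le_sum hinner
    _ ≤ schreierNorm p y := sum_rpow_le_schreierNorm hp0 hyfin hG'S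
end

section
/- Let 1 < p < ∞ and let (u_j) be a normalized block basic sequence of the unit vector basis in the Baernstein space B_p, with m_j = max supp u_j. Then (e_{m_j}) 3^{1/p}-dominates (u_j): for all scalars α_1,...,α_k, ‖Σ_{j=1}^k α_j u_j‖_{B_p} ≤ 3^{1/p} ‖Σ_{j=1}^k α_j e_{m_j}‖_{B_p}. -/
/-- `F < G` for finite sets of naturals: every element of `F` is below every element of `G`. -/
def FinsetLT (F G : Finset ℕ) : Prop := ∀ a ∈ F, ∀ b ∈ G, a < b

/-- A Schreier chain: a finite collection of nonempty, pairwise consecutive Schreier sets. -/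
def IsSchreierChain (C : Finset (Finset ℕ)) : Prop :=
  (∀ F ∈ C, F.Nonempty ∧ IsSchreier F) ∧
    ∀ F ∈ C, ∀ G ∈ C, F ≠ G → FinsetLT F G ∨ FinsetLT G F

/-- The Baernstein norm: `‖x‖_{B_p} = sup_𝒞 (∑_{F ∈ 𝒞} (∑_{n ∈ F} |x n|)^p)^(1/p)`,
the supremum being over all Schreier chains `𝒞`. -/
noncomputable def baernsteinNorm (p : ℝ) (x : ℕ → ℝ) : ℝ :=
  ⨆ C : {C : Finset (Finset ℕ) // IsSchreierChain C},
    (∑ F ∈ C.1, (∑ n ∈ F, |x n|) ^ p) ^ (1 / p)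

/-!
Split a Schreier chain into the sets meeting at most one block `u j` and the others. A set meeting
only `u j` carries at most `|α j|` times its share of `‖u j‖ = 1`, so these sets contribute at most
`∑ |α j|^p ≤ ‖∑ α j e_{m j}‖^p`. A set `F` meeting several blocks is replaced by the set of the
maxima `m j` of those blocks: it is again Schreier, since `|F| ≤ min F` and each `m j` exceeds a
point of `F`, and it carries at least the mass of `F`. Consecutive sets of the chain share at most
one such maximum, so the sets of even and of odd position each give a Schreier chain of maxima,
which contributes `2 ‖∑ α j e_{m j}‖^p` more.
-/

open Finset

theorem isSchreier_iff {F : Finset ℕ} : IsSchreier F ↔ ∀ n ∈ F, #F ≤ n :=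
  ⟨fun h n hn => (h ⟨n, hn⟩).trans (min'_le F n hn), fun h hF => h _ (min'_mem F hF)⟩

theorem IsSchreier.one_le {F : Finset ℕ} (hF : IsSchreier F) {n : ℕ} (hn : n ∈ F) : 1 ≤ n :=
  (card_pos.2 ⟨n, hn⟩).trans_le (isSchreier_iff.1 hF n hn)

theorem FinsetLT.trans {F G H : Finset ℕ} (hFG : FinsetLT F G) (hGH : FinsetLT G H)
    (hG : G.Nonempty) : FinsetLT F H := fun a ha c hc =>
  let ⟨b, hb⟩ := hG
  (hFG a ha b hb).trans (hGH b hb c hc)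

theorem FinsetLT.not_self {F : Finset ℕ} (hF : F.Nonempty) : ¬FinsetLT F F := fun h =>
  let ⟨a, ha⟩ := hF
  lt_irrefl a (h a ha a ha)

theorem finsetLT_of_le_of_le {F G H : Finset ℕ} (hFG : ∀ a ∈ F, ∀ b ∈ G, a ≤ b)
    (hGH : ∀ b ∈ G, ∀ c ∈ H, b ≤ c) (hG : 1 < #G) : FinsetLT F H := fun a ha c hc => by
  obtain ⟨b, hb, b', hb', hbb'⟩ := one_lt_card.1 hG
  have := hFG a ha b hb; have := hFG a ha b' hb'
  have := hGH b hb c hc; have := hGH b' hb' c hc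
  omega

instance : Nonempty {C : Finset (Finset ℕ) // IsSchreierChain C} :=
  ⟨⟨∅, by simp [IsSchreierChain]⟩⟩

theorem IsSchreierChain.mono {C D : Finset (Finset ℕ)} (hC : IsSchreierChain C) (hD : D ⊆ C) :
    IsSchreierChain D :=
  ⟨fun F hF => hC.1 F (hD hF), fun F hF G hG => hC.2 F (hD hF) G (hD hG)⟩

theorem IsSchreierChain.eq_of_mem {C : Finset (Finset ℕ)} (hC : IsSchreierChain C)
    {F G : Finset ℕ} (hF : F ∈ C) (hG : G ∈ C) {n : ℕ} (hnF : n ∈ F) (hnG : n ∈ G) : F = G := by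
  by_contra hne
  rcases hC.2 F hF G hG hne with h | h
  · exact lt_irrefl n (h n hnF n hnG)
  · exact lt_irrefl n (h n hnG n hnF)

section Image

variable {ι : Type*} {s : Finset ι} {g : ι → Finset ℕ}

theorem isSchreierChain_image (hg : ∀ i ∈ s, (g i).Nonempty ∧ IsSchreier (g i))
    (hlt : (s : Set ι).Pairwise fun i j => FinsetLT (g i) (g j) ∨ FinsetLT (g j) (g i)) :
    IsSchreierChain (s.image g) := by
  refine ⟨by simpa using hg, ?_⟩
  simp only [mem_image]
  rintro _ ⟨i, hi, rfl⟩ _ ⟨j, hj, rfl⟩ hne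
  exact hlt hi hj fun h => hne (h ▸ rfl)

theorem injOn_of_pairwise_finsetLT (hg : ∀ i ∈ s, (g i).Nonempty)
    (hlt : (s : Set ι).Pairwise fun i j => FinsetLT (g i) (g j) ∨ FinsetLT (g j) (g i)) :
    Set.InjOn g s := fun i hi j hj hij => by
  by_contra hne
  obtain h | h := hlt hi hj hne <;> exact FinsetLT.not_self (hg i hi) (hij ▸ h)

end Image

open Classical in
theorem IsSchreierChain.card_filter_finsetLT_eq_succ {D : Finset (Finset ℕ)}
    (hD : IsSchreierChain D) {F F' : Finset ℕ} (hF : F ∈ D) (hlt : FinsetLT F F')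
    (hnone : ∀ H ∈ D, FinsetLT F H → ¬FinsetLT H F') :
    #{H ∈ D | FinsetLT H F'} = #{H ∈ D | FinsetLT H F} + 1 := by
  have hFne := (hD.1 F hF).1
  rw [← card_insert_of_notMem (s := {H ∈ D | FinsetLT H F})
    fun h => FinsetLT.not_self hFne (mem_filter.1 h).2]
  congr 1
  ext H
  simp only [mem_filter, mem_insert]
  constructor
  · rintro ⟨hH, hHF'⟩
    by_cases hHF : H = F
    · exact .inl hHF
    · exact .inr ⟨hH, (hD.2 H hH F hF hHF).resolve_right fun h => hnone H hH h hHF'⟩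
  · rintro (rfl | ⟨hH, hHF⟩)
    · exact ⟨hF, hlt⟩
    · exact ⟨hH, hHF.trans hlt hFne⟩

-- `β_p(x, 𝒞) ^ p`, so that `baernsteinNorm p x` is the supremum of `chainSum p x 𝒞 ^ (1 / p)`
noncomputable def chainSum (p : ℝ) (x : ℕ → ℝ) (C : Finset (Finset ℕ)) : ℝ :=
  ∑ F ∈ C, (∑ n ∈ F, |x n|) ^ p

section Norm

variable {p : ℝ} {x : ℕ → ℝ} {C : Finset (Finset ℕ)}

theorem chainSum_nonneg : 0 ≤ chainSum p x C :=
  sum_nonneg fun _ _ => Real.rpow_nonneg (sum_nonneg fun _ _ => abs_nonneg _) _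

theorem baernsteinNorm_nonneg : 0 ≤ baernsteinNorm p x :=
  Real.iSup_nonneg fun _ => Real.rpow_nonneg chainSum_nonneg _

theorem chainSum_le_card_mul (hp : 0 < p) {S : Finset ℕ} (hS : Function.support x ⊆ S)
    (hC : IsSchreierChain C) : chainSum p x C ≤ #S * (∑ n ∈ S, |x n|) ^ p := by
  classical
  have hsum_le : ∀ F : Finset ℕ, ∑ n ∈ F, |x n| ≤ ∑ n ∈ S, |x n| := fun F =>
    calc ∑ n ∈ F, |x n| = ∑ n ∈ F with n ∈ S, |x n| :=
          (sum_filter_of_ne fun n _ h => hS (abs_ne_zero.1 h)).symm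
      _ ≤ ∑ n ∈ S, |x n| :=
          sum_le_sum_of_subset_of_nonneg (fun n hn => (mem_filter.1 hn).2) fun _ _ _ => abs_nonneg _
  have hmeet : ∀ F ∈ C, (∑ n ∈ F, |x n|) ^ p ≠ 0 → ¬Disjoint F S := fun F _ h hdisj => by
    refine h ?_
    rw [sum_eq_zero fun n hn => ?_, Real.zero_rpow hp.ne']
    by_contra hxn
    exact disjoint_left.1 hdisj hn (hS (abs_ne_zero.1 hxn))
  have hcard : #{F ∈ C | ¬Disjoint F S} ≤ #S :=
    card_le_card_of_forall_subsingleton (fun F n => n ∈ F)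
      (fun F hF => by simpa [not_disjoint_iff, and_comm] using (mem_filter.1 hF).2)
      fun n _ F hF G hG => hC.eq_of_mem (mem_filter.1 hF.1).1 (mem_filter.1 hG.1).1 hF.2 hG.2
  rw [chainSum, ← sum_filter_of_ne hmeet]
  calc ∑ F ∈ C with ¬Disjoint F S, (∑ n ∈ F, |x n|) ^ p
      ≤ ∑ _F ∈ ({F ∈ C | ¬Disjoint F S} : Finset _), (∑ n ∈ S, |x n|) ^ p :=
        sum_le_sum fun F _ => Real.rpow_le_rpow (sum_nonneg fun _ _ => abs_nonneg _)
          (hsum_le F) hp.le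
    _ ≤ #S * (∑ n ∈ S, |x n|) ^ p := by
        rw [sum_const, nsmul_eq_mul]
        gcongr

theorem bddAbove_chainSum_rpow (hp : 0 < p) (hx : (Function.support x).Finite) :
    BddAbove (Set.range fun C : {C // IsSchreierChain C} => chainSum p x C.1 ^ (1 / p)) := by
  refine ⟨(#hx.toFinset * (∑ n ∈ hx.toFinset, |x n|) ^ p) ^ (1 / p), ?_⟩
  rintro - ⟨C, rfl⟩
  exact Real.rpow_le_rpow chainSum_nonneg
    (chainSum_le_card_mul hp (by simp) C.2) (by positivity)

theorem chainSum_le_baernsteinNorm_rpow (hp : 0 < p) (hx : (Function.support x).Finite)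
    (hC : IsSchreierChain C) : chainSum p x C ≤ baernsteinNorm p x ^ p := by
  have h : chainSum p x C ^ (1 / p) ≤ baernsteinNorm p x :=
    le_ciSup (bddAbove_chainSum_rpow hp hx) (⟨C, hC⟩ : {C // IsSchreierChain C})
  calc chainSum p x C = (chainSum p x C ^ (1 / p)) ^ p := by
        rw [one_div, Real.rpow_inv_rpow chainSum_nonneg hp.ne']
    _ ≤ baernsteinNorm p x ^ p := Real.rpow_le_rpow (Real.rpow_nonneg chainSum_nonneg _) h hp.le

theorem baernsteinNorm_le_of_forall_chainSum_le (hp : 0 < p) {B : ℝ} (hB : 0 ≤ B)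
    (h : ∀ C, IsSchreierChain C → chainSum p x C ≤ B ^ p) : baernsteinNorm p x ≤ B :=
  ciSup_le fun C => by
    calc chainSum p x C.1 ^ (1 / p) ≤ (B ^ p) ^ (1 / p) :=
          Real.rpow_le_rpow chainSum_nonneg (h C.1 C.2) (by positivity)
      _ = B := by rw [one_div, Real.rpow_rpow_inv hB hp.ne']

theorem sum_abs_le_baernsteinNorm (hp : 0 < p) (hx : (Function.support x).Finite)
    {F : Finset ℕ} (hF : F.Nonempty) (hFS : IsSchreier F) :
    ∑ n ∈ F, |x n| ≤ baernsteinNorm p x := by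
  have h := chainSum_le_baernsteinNorm_rpow (C := {F}) hp hx ⟨by simpa using ⟨hF, hFS⟩, by simp⟩
  rw [chainSum, sum_singleton] at h
  exact (Real.rpow_le_rpow_iff (sum_nonneg fun _ _ => abs_nonneg _) baernsteinNorm_nonneg hp).1 h

theorem sum_rpow_le_baernsteinNorm_rpow {ι : Type*} {s : Finset ι} {g : ι → Finset ℕ}
    (hp : 0 < p) (hx : (Function.support x).Finite)
    (hg : ∀ i ∈ s, (g i).Nonempty ∧ IsSchreier (g i))
    (hlt : (s : Set ι).Pairwise fun i j => FinsetLT (g i) (g j) ∨ FinsetLT (g j) (g i)) :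
    ∑ i ∈ s, (∑ n ∈ g i, |x n|) ^ p ≤ baernsteinNorm p x ^ p := by
  rw [← sum_image (f := fun G => (∑ n ∈ G, |x n|) ^ p)
    (injOn_of_pairwise_finsetLT (fun i hi => (hg i hi).1) hlt)]
  exact chainSum_le_baernsteinNorm_rpow hp hx (isSchreierChain_image hg hlt)

theorem baernsteinNorm_eq_zero (hp : p ≠ 0) (hx : Function.support x ⊆ {0}) :
    baernsteinNorm p x = 0 := by
  have hzero : ∀ C : {C // IsSchreierChain C}, chainSum p x C.1 ^ (1 / p) = 0 := fun C => by
    have : chainSum p x C.1 = 0 := sum_eq_zero fun F hF => by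
      rw [sum_eq_zero fun n hn => ?_, Real.zero_rpow hp]
      by_contra hxn
      have := (C.2.1 F hF).2.one_le hn
      have := hx (abs_ne_zero.1 hxn)
      simp_all
    rw [this, Real.zero_rpow (one_div_ne_zero hp)]
  exact (congrArg iSup (funext hzero)).trans ciSup_const

end Norm

structure IsBlockSequence (u : ℕ → ℕ → ℝ) (m : ℕ → ℕ) : Prop where
  isGreatest_support : ∀ j, IsGreatest (Function.support (u j)) (m j)
  lt_of_mem_support_succ : ∀ j, ∀ i ∈ Function.support (u (j + 1)), m j < i

namespace IsBlockSequence

variable {u : ℕ → ℕ → ℝ} {m : ℕ → ℕ}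

theorem le_of_ne_zero (hu : IsBlockSequence u m) {j n : ℕ} (h : u j n ≠ 0) : n ≤ m j :=
  (hu.isGreatest_support j).2 h

theorem finite_support (hu : IsBlockSequence u m) (j : ℕ) : (Function.support (u j)).Finite :=
  (hu.isGreatest_support j).bddAbove.finite

theorem strictMono (hu : IsBlockSequence u m) : StrictMono m :=
  strictMono_nat_of_lt_succ fun j =>
    hu.lt_of_mem_support_succ j _ (hu.isGreatest_support (j + 1)).1

theorem lt_of_ne_zero (hu : IsBlockSequence u m) {j j' a b : ℕ} (hj : j < j') (ha : u j a ≠ 0)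
    (hb : u j' b ≠ 0) : a < b := by
  obtain ⟨i, rfl⟩ := Nat.exists_eq_add_of_lt hj
  calc a ≤ m j := hu.le_of_ne_zero ha
    _ ≤ m (j + i) := hu.strictMono.monotone (Nat.le_add_right j i)
    _ < b := hu.lt_of_mem_support_succ _ b hb

theorem eq_of_ne_zero (hu : IsBlockSequence u m) {j j' n : ℕ} (hj : u j n ≠ 0)
    (hj' : u j' n ≠ 0) : j = j' := by
  by_contra hne
  rcases lt_or_gt_of_ne hne with h | h
  · exact lt_irrefl n (hu.lt_of_ne_zero h hj hj')
  · exact lt_irrefl n (hu.lt_of_ne_zero h hj' hj)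

theorem one_le_of_baernsteinNorm_ne_zero (hu : IsBlockSequence u m) {p : ℝ} (hp : p ≠ 0) {j : ℕ}
    (hj : baernsteinNorm p (u j) ≠ 0) : 1 ≤ m j := by
  by_contra h
  refine hj (baernsteinNorm_eq_zero hp fun n hn => ?_)
  have := hu.le_of_ne_zero hn
  simp only [Set.mem_singleton_iff]
  omega

end IsBlockSequence

open Classical in
noncomputable def blocksMeeting (u : ℕ → ℕ → ℝ) (k : ℕ) (F : Finset ℕ) : Finset (Fin k) :=
  {j | ∃ n ∈ F, u j n ≠ 0}

noncomputable def blockMaxima (u : ℕ → ℕ → ℝ) (m : ℕ → ℕ) (k : ℕ) (F : Finset ℕ) : Finset ℕ :=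
  (blocksMeeting u k F).image fun j : Fin k => m j

section Blocks

variable {u : ℕ → ℕ → ℝ} {m : ℕ → ℕ} {k : ℕ} {F F' : Finset ℕ}

theorem mem_blocksMeeting {j : Fin k} : j ∈ blocksMeeting u k F ↔ ∃ n ∈ F, u j n ≠ 0 := by
  simp [blocksMeeting]

theorem IsBlockSequence.card_blocksMeeting_le (hu : IsBlockSequence u m) :
    #(blocksMeeting u k F) ≤ #F :=
  card_le_card_of_forall_subsingleton (fun (j : Fin k) n => u j n ≠ 0)
    (fun _ hj => mem_blocksMeeting.1 hj)
    fun _ _ _ hi _ hj => Fin.ext (hu.eq_of_ne_zero hi.2 hj.2)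

theorem IsBlockSequence.le_of_mem_blocksMeeting (hu : IsBlockSequence u m) (hF : FinsetLT F F')
    {j j' : Fin k} (hj : j ∈ blocksMeeting u k F) (hj' : j' ∈ blocksMeeting u k F') : j ≤ j' := by
  obtain ⟨a, ha, hua⟩ := mem_blocksMeeting.1 hj
  obtain ⟨b, hb, hub⟩ := mem_blocksMeeting.1 hj'
  exact le_of_not_gt fun h => (hF a ha b hb).not_gt (hu.lt_of_ne_zero h hub hua)

theorem IsBlockSequence.isSchreier_blockMaxima (hu : IsBlockSequence u m) (hF : IsSchreier F) :
    IsSchreier (blockMaxima u m k F) := by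
  refine isSchreier_iff.2 fun i hi => ?_
  obtain ⟨j, hj, rfl⟩ := mem_image.1 hi
  obtain ⟨n, hn, hun⟩ := mem_blocksMeeting.1 hj
  calc #(blockMaxima u m k F) ≤ #(blocksMeeting u k F) := card_image_le
    _ ≤ #F := hu.card_blocksMeeting_le
    _ ≤ n := isSchreier_iff.1 hF n hn
    _ ≤ m j := hu.le_of_ne_zero hun

theorem IsBlockSequence.blockMaxima_le (hu : IsBlockSequence u m) (hF : FinsetLT F F') :
    ∀ a ∈ blockMaxima u m k F, ∀ b ∈ blockMaxima u m k F', a ≤ b := by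
  simp only [blockMaxima, forall_mem_image]
  exact fun j hj j' hj' =>
    hu.strictMono.monotone (show (j : ℕ) ≤ j' from hu.le_of_mem_blocksMeeting hF hj hj')

theorem card_blockMaxima (hm : Function.Injective m) :
    #(blockMaxima u m k F) = #(blocksMeeting u k F) :=
  card_image_of_injective (f := fun j : Fin k => m j) _ fun _ _ h => Fin.ext (hm h)

theorem sum_abs_sum_smul_le (α : Fin k → ℝ) :
    ∑ n ∈ F, |(∑ j, α j • u j) n| ≤ ∑ j ∈ blocksMeeting u k F, |α j| * ∑ n ∈ F, |u j n| := by
  classical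
  calc ∑ n ∈ F, |(∑ j, α j • u j) n| ≤ ∑ n ∈ F, ∑ j, |α j| * |u j n| :=
        sum_le_sum fun n _ => by
          simpa [Finset.sum_apply, abs_mul] using abs_sum_le_sum_abs (fun j => α j * u j n) univ
    _ = ∑ j, |α j| * ∑ n ∈ F, |u j n| := by rw [sum_comm]; simp only [mul_sum]
    _ = ∑ j ∈ blocksMeeting u k F, |α j| * ∑ n ∈ F, |u j n| := by
        refine (sum_filter_of_ne fun j _ h => ?_).symm
        obtain ⟨n, hn, hun⟩ := exists_ne_zero_of_sum_ne_zero (right_ne_zero_of_mul h)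
        exact ⟨n, hn, abs_ne_zero.1 hun⟩

theorem sum_smul_single_apply (hm : Function.Injective m) (α : Fin k → ℝ) (j : Fin k) :
    (∑ i, α i • (Pi.single (m i) 1 : ℕ → ℝ)) (m j) = α j := by
  simp [Finset.sum_apply, Pi.single_apply, hm.eq_iff, Fin.val_inj]

theorem finite_support_sum_smul_single (α : Fin k → ℝ) :
    (Function.support (∑ i, α i • (Pi.single (m i) 1 : ℕ → ℝ))).Finite := by
  refine (Set.finite_range fun j : Fin k => m j).subset fun n hn => ?_
  obtain ⟨j, -, hj⟩ := exists_ne_zero_of_sum_ne_zero (by simpa [Finset.sum_apply] using hn)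
  exact ⟨j, by_contra fun h => hj (by simp [Ne.symm h])⟩

theorem sum_abs_blockMaxima (hm : Function.Injective m) (α : Fin k → ℝ) :
    ∑ i ∈ blockMaxima u m k F, |(∑ j, α j • (Pi.single (m j) 1 : ℕ → ℝ)) i| =
      ∑ j ∈ blocksMeeting u k F, |α j| := by
  rw [blockMaxima, sum_image fun _ _ _ _ h => Fin.ext (hm h)]
  simp only [sum_smul_single_apply hm]

end Blocks

theorem rpow_sum_of_card_le_one {ι : Type*} {s : Finset ι} (f : ι → ℝ) {p : ℝ} (hp : p ≠ 0)
    (hs : #s ≤ 1) : (∑ i ∈ s, f i) ^ p = ∑ i ∈ s, f i ^ p := by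
  obtain rfl | ⟨a, ha⟩ := s.eq_empty_or_nonempty
  · simp [Real.zero_rpow hp]
  · rw [eq_singleton_iff_unique_mem.2 ⟨ha, fun b hb => card_le_one.1 hs b hb a ha⟩]
    simp

open Classical in
theorem IsSchreierChain.sum_rpow_le_two_mul {p : ℝ} {x : ℕ → ℝ} {C : Finset (Finset ℕ)}
    (hp : 0 < p) (hx : (Function.support x).Finite) (hC : IsSchreierChain C)
    {G : Finset ℕ → Finset ℕ} (hG : ∀ F ∈ C, IsSchreier (G F))
    (hle : ∀ F ∈ C, ∀ F' ∈ C, FinsetLT F F' → ∀ a ∈ G F, ∀ b ∈ G F', a ≤ b) :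
    ∑ F ∈ C with 1 < #(G F), (∑ n ∈ G F, |x n|) ^ p ≤ 2 * baernsteinNorm p x ^ p := by
  set D := C.filter fun F => 1 < #(G F)
  have hDC : D ⊆ C := filter_subset _ _
  set rank : Finset ℕ → ℕ := fun F => #{H ∈ D | FinsetLT H F}
  have hsame : ∀ F ∈ D, ∀ F' ∈ D, FinsetLT F F' → (Even (rank F) ↔ Even (rank F')) →
      FinsetLT (G F) (G F') := by
    intro F hF F' hF' hlt hpar
    -- a set of `D` strictly between `F` and `F'` has two points in its image, which separate
    -- `G F` from `G F'`; without one, the ranks of `F` and `F'` are consecutive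
    by_cases hbetween : ∃ H ∈ D, FinsetLT F H ∧ FinsetLT H F'
    · obtain ⟨H, hH, hFH, hHF'⟩ := hbetween
      exact finsetLT_of_le_of_le (hle F (hDC hF) H (hDC hH) hFH)
        (hle H (hDC hH) F' (hDC hF') hHF') (mem_filter.1 hH).2
    · push Not at hbetween
      simp only [rank, (hC.mono hDC).card_filter_finsetLT_eq_succ hF hlt hbetween,
        Nat.even_add_one] at hpar
      exact (iff_not_self hpar).elim
  have hclass : ∀ s ⊆ D, (∀ F ∈ s, ∀ F' ∈ s, Even (rank F) ↔ Even (rank F')) →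
      ∑ F ∈ s, (∑ n ∈ G F, |x n|) ^ p ≤ baernsteinNorm p x ^ p := by
    intro s hs hpar
    refine sum_rpow_le_baernsteinNorm_rpow hp hx
      (fun F hF => ⟨card_pos.1 (zero_lt_one.trans (mem_filter.1 (hs hF)).2),
        hG F (hDC (hs hF))⟩) fun F hF F' hF' hne => ?_
    exact (hC.2 F (hDC (hs hF)) F' (hDC (hs hF')) hne).imp
      (fun h => hsame F (hs hF) F' (hs hF') h (hpar F hF F' hF'))
      (fun h => hsame F' (hs hF') F (hs hF) h (hpar F' hF' F hF))
  rw [← sum_filter_add_sum_filter_not D fun F => Even (rank F), two_mul]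
  exact add_le_add
    (hclass _ (filter_subset _ _) fun F hF F' hF' =>
      iff_of_true (mem_filter.1 hF).2 (mem_filter.1 hF').2)
    (hclass _ (filter_subset _ _) fun F hF F' hF' =>
      iff_of_false (mem_filter.1 hF).2 (mem_filter.1 hF').2)

section Estimates

variable {p : ℝ} {u : ℕ → ℕ → ℝ} {m : ℕ → ℕ} {k : ℕ} {C : Finset (Finset ℕ)}

theorem sum_rpow_le_sum_abs_rpow_of_card_blocksMeeting_le_one (hp : 0 < p)
    (hfin : ∀ j : Fin k, (Function.support (u j)).Finite)
    (hu1 : ∀ j : Fin k, baernsteinNorm p (u j) ≤ 1) (α : Fin k → ℝ) (hC : IsSchreierChain C) :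
    ∑ F ∈ C with #(blocksMeeting u k F) ≤ 1, (∑ n ∈ F, |(∑ j, α j • u j) n|) ^ p ≤
      ∑ j, |α j| ^ p := by
  set t : Finset ℕ → Fin k → ℝ := fun F j => ∑ n ∈ F, |u j n|
  have ht : ∀ F j, 0 ≤ t F j := fun _ _ => sum_nonneg fun _ _ => abs_nonneg _
  have hcol : ∀ j, ∑ F ∈ C with #(blocksMeeting u k F) ≤ 1, t F j ^ p ≤ 1 := fun j =>
    (chainSum_le_baernsteinNorm_rpow hp (hfin j) (hC.mono (filter_subset _ _))).trans
      (Real.rpow_le_one baernsteinNorm_nonneg (hu1 j) hp.le)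
  calc _ ≤ ∑ F ∈ C with #(blocksMeeting u k F) ≤ 1, ∑ j, |α j| ^ p * t F j ^ p := by
        refine sum_le_sum fun F hF => ?_
        calc (∑ n ∈ F, |(∑ j, α j • u j) n|) ^ p
            ≤ (∑ j ∈ blocksMeeting u k F, |α j| * t F j) ^ p :=
              Real.rpow_le_rpow (sum_nonneg fun _ _ => abs_nonneg _) (sum_abs_sum_smul_le α) hp.le
          _ = ∑ j ∈ blocksMeeting u k F, (|α j| * t F j) ^ p :=
              rpow_sum_of_card_le_one _ hp.ne' (mem_filter.1 hF).2
          _ ≤ ∑ j, (|α j| * t F j) ^ p :=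
              sum_le_sum_of_subset_of_nonneg (subset_univ _) fun j _ _ =>
                Real.rpow_nonneg (mul_nonneg (abs_nonneg _) (ht F j)) _
          _ = ∑ j, |α j| ^ p * t F j ^ p :=
              sum_congr rfl fun j _ => Real.mul_rpow (abs_nonneg _) (ht F j)
    _ = ∑ j, |α j| ^ p * ∑ F ∈ C with #(blocksMeeting u k F) ≤ 1, t F j ^ p := by
        rw [sum_comm]
        simp only [mul_sum]
    _ ≤ ∑ j, |α j| ^ p := sum_le_sum fun j _ =>
        mul_le_of_le_one_right (Real.rpow_nonneg (abs_nonneg _) _) (hcol j)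

theorem sum_abs_rpow_le_baernsteinNorm_rpow (hp : 0 < p) (hm : Function.Injective m)
    (hm1 : ∀ j : Fin k, 1 ≤ m j) (α : Fin k → ℝ) :
    ∑ j, |α j| ^ p ≤ baernsteinNorm p (∑ j, α j • (Pi.single (m j) 1 : ℕ → ℝ)) ^ p := by
  have h := sum_rpow_le_baernsteinNorm_rpow (s := univ) (g := fun j : Fin k => {m j}) hp
    (finite_support_sum_smul_single (m := m) α)
    (fun j _ => ⟨singleton_nonempty _, isSchreier_iff.2 fun n hn => by
      simpa [mem_singleton.1 hn] using hm1 j⟩)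
    fun i _ j _ hij => (lt_or_gt_of_ne (hm.ne (Fin.val_injective.ne hij))).imp
      (fun h => by simpa [FinsetLT] using h) (fun h => by simpa [FinsetLT] using h)
  simpa only [sum_singleton, sum_smul_single_apply hm] using h

theorem chainSum_sum_smul_le_three_mul (hp : 0 < p) (hu : IsBlockSequence u m)
    (hu1 : ∀ j : Fin k, baernsteinNorm p (u j) ≤ 1) (hm1 : ∀ j : Fin k, 1 ≤ m j)
    (α : Fin k → ℝ) (hC : IsSchreierChain C) :
    chainSum p (∑ j, α j • u j) C ≤
      3 * baernsteinNorm p (∑ j, α j • (Pi.single (m j) 1 : ℕ → ℝ)) ^ p := by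
  set y := ∑ j, α j • (Pi.single (m j) 1 : ℕ → ℝ)
  have hmass : ∀ F ∈ C,
      ∑ n ∈ F, |(∑ j, α j • u j) n| ≤ ∑ n ∈ blockMaxima u m k F, |y n| := fun F hF => by
    rw [sum_abs_blockMaxima hu.strictMono.injective]
    refine (sum_abs_sum_smul_le α).trans
      (sum_le_sum fun j _ => mul_le_of_le_one_right (abs_nonneg _) ?_)
    exact (sum_abs_le_baernsteinNorm hp (hu.finite_support j) (hC.1 F hF).1
      (hC.1 F hF).2).trans (hu1 j)
  have hfilter : C.filter (fun F => ¬#(blocksMeeting u k F) ≤ 1) =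
      C.filter (fun F => 1 < #(blockMaxima u m k F)) :=
    filter_congr fun F _ => by rw [not_le, card_blockMaxima hu.strictMono.injective]
  rw [chainSum, ← sum_filter_add_sum_filter_not C fun F => #(blocksMeeting u k F) ≤ 1, hfilter]
  calc _ ≤ baernsteinNorm p y ^ p + 2 * baernsteinNorm p y ^ p := by
        refine add_le_add ((sum_rpow_le_sum_abs_rpow_of_card_blocksMeeting_le_one hp
          (fun j => hu.finite_support j) hu1 α hC).trans
            (sum_abs_rpow_le_baernsteinNorm_rpow hp hu.strictMono.injective hm1 α)) ?_
        refine (sum_le_sum fun F hF => Real.rpow_le_rpow (sum_nonneg fun _ _ => abs_nonneg _)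
          (hmass F (mem_filter.1 hF).1) hp.le).trans ?_
        exact hC.sum_rpow_le_two_mul hp (finite_support_sum_smul_single α)
          (fun F hF => hu.isSchreier_blockMaxima (hC.1 F hF).2) fun F _ F' _ => hu.blockMaxima_le
    _ = 3 * baernsteinNorm p y ^ p := by ring

end Estimates

theorem baernstein_maxSupport_dominates_general (p : ℝ) (hp : 1 < p)
    (u : ℕ → ℕ → ℝ) (m : ℕ → ℕ)
    (hmax : ∀ j, IsGreatest (Function.support (u j)) (m j))
    (hblock : ∀ j, ∀ i ∈ Function.support (u (j + 1)), m j < i)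
    (hnorm : ∀ j, baernsteinNorm p (u j) = 1)
    (k : ℕ) (α : Fin k → ℝ) :
    baernsteinNorm p (∑ j, α j • u j) ≤
      (3 : ℝ) ^ (1 / p) * baernsteinNorm p (∑ j, α j • (Pi.single (m j) 1 : ℕ → ℝ)) := by
  have hp0 : 0 < p := by linarith
  have hu : IsBlockSequence u m := ⟨hmax, hblock⟩
  have hm1 : ∀ j : Fin k, 1 ≤ m j := fun j =>
    hu.one_le_of_baernsteinNorm_ne_zero hp0.ne' (by rw [hnorm]; exact one_ne_zero)
  refine baernsteinNorm_le_of_forall_chainSum_le hp0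
    (mul_nonneg (by positivity) baernsteinNorm_nonneg) fun C hC => ?_
  rw [Real.mul_rpow (by positivity) baernsteinNorm_nonneg, ← Real.rpow_mul (by norm_num),
    one_div_mul_cancel hp0.ne', Real.rpow_one]
  exact chainSum_sum_smul_le_three_mul hp0 hu (fun j => (hnorm j).le) hm1 α hC

/-- Let `1 < p < ∞` and let `(u j)` be a normalized block basic sequence of the unit vector
basis in the Baernstein space `B_p`, with `m j = max (supp (u j))`. Then `(e_{m j})`
`3^(1/p)`-dominates `(u j)`. -/
theorem baernstein_maxSupport_dominates (p : ℝ) (hp : 1 < p)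
    (u : ℕ → ℕ → ℝ) (m : ℕ → ℕ)
    (hfin : ∀ j, (Function.support (u j)).Finite)
    (hmax : ∀ j, IsGreatest (Function.support (u j)) (m j))
    (hblock : ∀ j, ∀ i ∈ Function.support (u (j + 1)), m j < i)
    (hnorm : ∀ j, baernsteinNorm p (u j) = 1)
    (k : ℕ) (α : Fin k → ℝ) :
    baernsteinNorm p (∑ j, α j • u j) ≤
      (3 : ℝ) ^ (1 / p) * baernsteinNorm p (∑ j, α j • (Pi.single (m j) 1 : ℕ → ℝ)) :=
  baernstein_maxSupport_dominates_general p hp u m hmax hblock hnorm k α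
end
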